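/- arXiv:1809.10344 — 2 statements merged into one kernel-verified Lean document; each statement's English description precedes it below -/
import Mathlib

section
/- In the group G, the identity (vw₃w₂²)(w₂vw₃w₂)(w₂²vw₃) = w₂ holds. -/
/-- The relations for the group G with generators v (index 0), w₂ (index 1), w₃ (index 2):
v² = w₂⁴ = w₃² = 1, w₃⁻¹w₂w₃ = w₂⁻¹, (vw₃w₂³)³ = 1, (vw₃vw₂²)² = 1. -/
def GRels : Set (FreeGroup (Fin 3)) :=
  {FreeGroup.of 0 ^ 2, FreeGroup.of 1 ^ 4, FreeGroup.of 2 ^ 2,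
   (FreeGroup.of 2)⁻¹ * FreeGroup.of 1 * FreeGroup.of 2 * FreeGroup.of 1,
   (FreeGroup.of 0 * FreeGroup.of 2 * FreeGroup.of 1 ^ 3) ^ 3,
   (FreeGroup.of 0 * FreeGroup.of 2 * FreeGroup.of 0 * FreeGroup.of 1 ^ 2) ^ 2}

/-- The group G. -/
abbrev GGrp : Type := PresentedGroup GRels

/-- The generator v of G. -/
def gv : GGrp := PresentedGroup.of 0

/-- The generator w₂ of G. -/
def gw2 : GGrp := PresentedGroup.of 1

/-- The generator w₃ of G. -/
def gw3 : GGrp := PresentedGroup.of 2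

private def φ : FreeGroup (Fin 3) →* GGrp := QuotientGroup.mk' (Subgroup.normalClosure GRels)

private lemma rel_one {r : FreeGroup (Fin 3)} (h : r ∈ GRels) : φ r = 1 :=
  (QuotientGroup.eq_one_iff r).mpr (Subgroup.subset_normalClosure h)

private lemma phi_of (i : Fin 3) : φ (FreeGroup.of i) = PresentedGroup.of i := rfl

private lemma h3 : (gv * gw3 * gw2 ^ 3) ^ 3 = 1 := by
  have := rel_one (show (FreeGroup.of 0 * FreeGroup.of 2 * FreeGroup.of 1 ^ 3) ^ 3 ∈ GRels by
    simp [GRels])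
  simpa [map_mul, map_pow, phi_of, gv, gw2, gw3] using this

private lemma h4 : gw2 ^ 4 = 1 := by
  have := rel_one (show (FreeGroup.of 1 ^ 4 : FreeGroup (Fin 3)) ∈ GRels by simp [GRels])
  simpa [map_pow, phi_of, gw2] using this

/-- In G, (vw₃w₂²)(w₂vw₃w₂)(w₂²vw₃) = w₂. -/
theorem g_identity :
    (gv * gw3 * gw2 ^ 2) * (gw2 * gv * gw3 * gw2) * (gw2 ^ 2 * gv * gw3) = gw2 := by
  have key : (gv * gw3 * gw2 ^ 2) * (gw2 * gv * gw3 * gw2) * (gw2 ^ 2 * gv * gw3)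
      = (gv * gw3 * gw2 ^ 3) ^ 3 * (gw2 ^ 4)⁻¹ * gw2 := by
    rw [show (gv * gw3 * gw2 ^ 3) ^ 3
        = (gv * gw3 * gw2 ^ 3) * (gv * gw3 * gw2 ^ 3) * (gv * gw3 * gw2 ^ 3) by
          rw [pow_succ, pow_succ, pow_one]]
    group
  rw [key, h3, h4]; group
end

section
/- In the group G, the intersection of the subgroup generated by {w₂, vw₃} with the subgroup generated by {w₂, w₃} equals the cyclic subgroup generated by w₂. -/
lemma grel_one {r : FreeGroup (Fin 3)} (h : r ∈ GRels) : PresentedGroup.mk GRels r = 1 :=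
  (QuotientGroup.eq_one_iff r).2 (Subgroup.subset_normalClosure h)

lemma gw3_sq : gw3 * gw3 = 1 := by
  have := grel_one (show FreeGroup.of 2 ^ 2 ∈ GRels by simp [GRels])
  simpa [pow_two, gw3, PresentedGroup.of] using this

lemma gw3_inv : gw3⁻¹ = gw3 := by
  rw [inv_eq_iff_mul_eq_one, gw3_sq]

lemma gw3_conj : gw3⁻¹ * gw2 * gw3 = gw2⁻¹ := by
  have := grel_one (show (FreeGroup.of 2)⁻¹ * FreeGroup.of 1 * FreeGroup.of 2 * FreeGroup.of 1
      ∈ GRels by simp [GRels])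
  simp only [map_mul, map_inv] at this
  exact mul_eq_one_iff_eq_inv.mp this

lemma gw3_zpow (j : ℤ) : gw3 * gw2 ^ j = gw2 ^ (-j) * gw3 := by
  have hs : SemiconjBy gw3 gw2 gw2⁻¹ := by
    unfold SemiconjBy
    have := gw3_conj
    rw [← gw3_inv]
    calc gw3⁻¹ * gw2 = (gw3⁻¹ * gw2 * gw3) * gw3⁻¹ := by group
    _ = gw2⁻¹ * gw3⁻¹ := by rw [gw3_conj]
  have := hs.zpow_right j
  simpa [inv_zpow, ← zpow_neg, SemiconjBy] using this

/-- every element of ⟨w₂, w₃⟩ has the form w₂^i or w₂^i * w₃ -/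
lemma form_lemma {x : GGrp} (hx : x ∈ Subgroup.closure {gw2, gw3}) :
    ∃ i : ℤ, x = gw2 ^ i ∨ x = gw2 ^ i * gw3 := by
  induction hx using Subgroup.closure_induction with
  | mem y hy =>
    simp only [Set.mem_insert_iff, Set.mem_singleton_iff] at hy
    rcases hy with h | h
    · exact ⟨1, Or.inl (by simp [h])⟩
    · exact ⟨0, Or.inr (by simp [h])⟩
  | one => exact ⟨0, Or.inl (by simp)⟩
  | mul y z _ _ hy hz =>
    obtain ⟨i, hi | hi⟩ := hy <;> obtain ⟨j, hj | hj⟩ := hz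
    · exact ⟨i + j, Or.inl (by rw [hi, hj, zpow_add])⟩
    · exact ⟨i + j, Or.inr (by rw [hi, hj, zpow_add]; group)⟩
    · refine ⟨i - j, Or.inr ?_⟩
      rw [hi, hj, mul_assoc, gw3_zpow, ← mul_assoc, ← zpow_add]
      ring_nf
    · refine ⟨i - j, Or.inl ?_⟩
      rw [hi, hj]
      calc gw2 ^ i * gw3 * (gw2 ^ j * gw3) = gw2 ^ i * (gw3 * gw2 ^ j) * gw3 := by group
      _ = gw2 ^ i * (gw2 ^ (-j) * gw3) * gw3 := by rw [gw3_zpow]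
      _ = gw2 ^ i * gw2 ^ (-j) * (gw3 * gw3) := by group
      _ = gw2 ^ (i - j) := by rw [gw3_sq, mul_one, ← zpow_add, ← sub_eq_add_neg]
  | inv y _ hy =>
    obtain ⟨i, hi | hi⟩ := hy
    · exact ⟨-i, Or.inl (by rw [hi, ← zpow_neg])⟩
    · refine ⟨i, Or.inr ?_⟩
      rw [hi, mul_inv_rev, gw3_inv]
      rw [← zpow_neg, gw3_zpow]
      simp

/-- the sign homomorphism data: v ↦ 1, w₂ ↦ 0, w₃ ↦ 1 in ℤ/2 -/
def sgnf : Fin 3 → Multiplicative (ZMod 2) :=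
  ![Multiplicative.ofAdd 1, 1, Multiplicative.ofAdd 1]

lemma sgnf_rels : ∀ r ∈ GRels, FreeGroup.lift sgnf r = 1 := by
  intro r hr
  simp only [GRels, Set.mem_insert_iff, Set.mem_singleton_iff] at hr
  rcases hr with rfl | rfl | rfl | rfl | rfl | rfl <;>
    simp only [map_mul, map_pow, map_inv, FreeGroup.lift_apply_of, sgnf] <;> decide

/-- the sign homomorphism G → ℤ/2 -/
def sgn : GGrp →* Multiplicative (ZMod 2) := PresentedGroup.toGroup sgnf_rels

lemma sgn_gw2 : sgn gw2 = 1 := by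
  have := PresentedGroup.toGroup.of sgnf_rels (x := (1 : Fin 3))
  simp only [sgn] at this ⊢; rw [show gw2 = PresentedGroup.of 1 from rfl, this]; rfl

lemma sgn_gw3 : sgn gw3 = Multiplicative.ofAdd 1 := by
  have := PresentedGroup.toGroup.of sgnf_rels (x := (2 : Fin 3))
  simp only [sgn] at this ⊢; rw [show gw3 = PresentedGroup.of 2 from rfl, this]; rfl

lemma sgn_gvgw3 : sgn (gv * gw3) = 1 := by
  have h0 := PresentedGroup.toGroup.of sgnf_rels (x := (0 : Fin 3))
  rw [map_mul, sgn_gw3]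
  have : sgn gv = Multiplicative.ofAdd 1 := by simp only [sgn] at h0 ⊢; rw [show gv = PresentedGroup.of 0 from rfl, h0]; rfl
  rw [this]; decide

/-- In G, ⟨w₂, vw₃⟩ ∩ ⟨w₂, w₃⟩ = ⟨w₂⟩. -/
theorem subgroup_intersection :
    Subgroup.closure {gw2, gv * gw3} ⊓ Subgroup.closure {gw2, gw3}
      = Subgroup.zpowers gw2 := by
  apply le_antisymm
  · rintro x ⟨hx1, hx2⟩
    obtain ⟨i, hi | hi⟩ := form_lemma hx2
    · exact ⟨i, hi.symm⟩
    · exfalso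
      have hker : Subgroup.closure {gw2, gv * gw3} ≤ sgn.ker := by
        rw [Subgroup.closure_le]
        rintro y (rfl | rfl)
        · exact sgn_gw2
        · exact sgn_gvgw3
      have h1 : sgn x = 1 := hker hx1
      rw [hi, map_mul, map_zpow, sgn_gw2, sgn_gw3, one_zpow, one_mul] at h1
      exact absurd h1 (by decide)
  · rw [Subgroup.zpowers_le]
    exact ⟨Subgroup.subset_closure (Set.mem_insert _ _),
      Subgroup.subset_closure (Set.mem_insert _ _)⟩
end
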